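/- arXiv:2102.02511 — 4 statements merged into one kernel-verified Lean document; each statement's English description precedes it below -/
import Mathlib

section
/- Let q = 2^m be a power of two and let k be an integer with 1 ≤ k ≤ 2^{m-1}. For any choice of 2k pairwise distinct code locators α = (α_1,…,α_{2k}) ∈ F_q^{2k}, there exist nonzero column multipliers v = (v_1,…,v_{2k}) ∈ F_q^{2k} such that the generalized Reed–Solomon code GRS_k(α,v) of length 2k and dimension k is self-dual, i.e., GRS_k(α,v)^⊥ = GRS_k(α,v). -/
open Polynomial Matrix

/-- The generalized Reed–Solomon code `GRS_k(α, v)` of length `n` and dimension `k`,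
with code locators `α` and column multipliers `v`: the set of words
`(v 1 * f(α 1), …, v n * f(α n))` for polynomials `f` of degree `< k`. -/
noncomputable def GRS {F : Type} [Field F] {n : ℕ} (k : ℕ) (α v : Fin n → F) :
    Submodule F (Fin n → F) :=
  Submodule.map (LinearMap.pi fun i => v i • Polynomial.leval (α i))
    (Polynomial.degreeLT F k)

/-- The dual code with respect to the standard bilinear form `(c, x) ↦ ∑ i, c i * x i`. -/
def dualCode {F : Type} [Field F] {ι : Type} [Fintype ι] (C : Submodule F (ι → F)) :
    Submodule F (ι → F) where
  carrier := {x | ∀ c ∈ C, ∑ i, c i * x i = 0}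
  add_mem' := by
    intro a b ha hb c hc
    simp only [Pi.add_apply, mul_add, Finset.sum_add_distrib, ha c hc, hb c hc, add_zero]
  zero_mem' := by intro c hc; simp
  smul_mem' := by
    intro r x hx c hc
    simp only [Pi.smul_apply, smul_eq_mul, mul_left_comm, ← Finset.mul_sum, hx c hc, mul_zero]

/-- The star-product (componentwise/Schur product) code `C ⋆ D`:
the span of all componentwise products of a codeword of `C` with a codeword of `D`. -/
def starProd {F : Type} [Field F] {ι : Type} (C D : Submodule F (ι → F)) :
    Submodule F (ι → F) :=
  Submodule.span F {x | ∃ c ∈ C, ∃ d ∈ D, x = c * d}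

/-- The Cartesian product code `C × C ⊆ F^{2n}`, realized on the index type `Fin n ⊕ Fin n`. -/
def cartProd {F : Type} [Field F] {n : ℕ} (C : Submodule F (Fin n → F)) :
    Submodule F (Fin n ⊕ Fin n → F) where
  carrier := {x | (fun i => x (Sum.inl i)) ∈ C ∧ (fun i => x (Sum.inr i)) ∈ C}
  add_mem' := fun ha hb => ⟨C.add_mem ha.1 hb.1, C.add_mem ha.2 hb.2⟩
  zero_mem' := ⟨C.zero_mem, C.zero_mem⟩
  smul_mem' := fun r x hx => ⟨C.smul_mem r hx.1, C.smul_mem r hx.2⟩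

/-! With the nodal weights `w i = ∏_{j ≠ i} (α i - α j)⁻¹` of `n` distinct locators, Lagrange
interpolation gives `∑ i, w i * h (α i) = coeff h (n - 1)` for every `h` of degree `< n`. Taking
`h = f * g` with `deg f, deg g < k` and `n = 2k`, the right-hand side vanishes, so choosing
`v i ^ 2 = w i` makes `GRS_k(α, v)` self-orthogonal. In characteristic two every element is a
square, and a self-orthogonal `[2k, k]` code is self-dual by counting dimensions. -/

open Lagrange Module Finset

theorem Polynomial.mul_mem_degreeLT {R : Type*} [Semiring R] {m n : ℕ} {f g : R[X]}
    (hf : f ∈ degreeLT R m) (hg : g ∈ degreeLT R n) : f * g ∈ degreeLT R (m + n - 1) := by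
  rcases eq_or_ne f 0 with rfl | hf0
  · simp
  rcases eq_or_ne g 0 with rfl | hg0
  · simp
  rw [mem_degreeLT] at hf hg ⊢
  have hfm := (natDegree_lt_iff_degree_lt hf0).mpr hf
  have hgn := (natDegree_lt_iff_degree_lt hg0).mpr hg
  have hmul := natDegree_mul_le (p := f) (q := g)
  have hfg : (f * g).natDegree < m + n - 1 := by omega
  exact degree_le_natDegree.trans_lt (by exact_mod_cast hfg)

namespace Lagrange

variable {F : Type*} [Field F] {ι : Type*} [DecidableEq ι] {s : Finset ι} {v : ι → F}

theorem sum_nodalWeight_mul_eval_eq_coeff (hvs : Set.InjOn v s) {f : F[X]}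
    (hf : f.degree < #s) : ∑ i ∈ s, nodalWeight s v i * f.eval (v i) = f.coeff (#s - 1) := by
  conv_rhs => rw [eq_interpolate hvs hf]
  rw [interpolate_apply, finsetSum_coeff]
  refine sum_congr rfl fun i hi => ?_
  have hdeg : (nodal (s.erase i) v).natDegree = #s - 1 := by
    rw [natDegree_nodal, card_erase_of_mem hi]
  rw [coeff_C_mul, basis_eq_prod_sub_inv_mul_nodal_div hi, ← nodal_erase_eq_nodal_div hi,
    coeff_C_mul, ← hdeg, nodal_monic.coeff_natDegree, mul_one, mul_comm]

theorem sum_nodalWeight_mul_eval_eq_zero (hvs : Set.InjOn v s) {f : F[X]}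
    (hf : f ∈ degreeLT F (#s - 1)) : ∑ i ∈ s, nodalWeight s v i * f.eval (v i) = 0 := by
  rw [mem_degreeLT] at hf
  rw [sum_nodalWeight_mul_eval_eq_coeff hvs (hf.trans_le (by exact_mod_cast Nat.sub_le _ _)),
    coeff_eq_zero_of_degree_lt hf]

end Lagrange

section DualCode

variable {F : Type} [Field F] {ι : Type} [Fintype ι]

theorem dualCode_eq_comap_dualAnnihilator [DecidableEq ι] (C : Submodule F (ι → F)) :
    dualCode C = C.dualAnnihilator.comap (dotProductEquiv F ι).toLinearMap := by
  ext x
  simp [dualCode, Submodule.mem_dualAnnihilator, dotProduct, mul_comm]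

theorem finrank_add_finrank_dualCode (C : Submodule F (ι → F)) :
    finrank F C + finrank F (dualCode C) = Fintype.card ι := by
  classical
  rw [dualCode_eq_comap_dualAnnihilator, Submodule.comap_equiv_eq_map_symm,
    LinearEquiv.finrank_map_eq, Subspace.finrank_add_finrank_dualAnnihilator_eq,
    finrank_fintype_fun_eq_card]

theorem dualCode_eq_self_of_le_dualCode {C : Submodule F (ι → F)} (hC : C ≤ dualCode C)
    (hdim : 2 * finrank F C = Fintype.card ι) : dualCode C = C :=
  (Submodule.eq_of_le_of_finrank_le hC (by have := finrank_add_finrank_dualCode C; omega)).symm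

end DualCode

section GRS

variable {F : Type} [Field F] {n k : ℕ} {α v : Fin n → F}

theorem finrank_GRS (hα : Function.Injective α) (hv : ∀ i, v i ≠ 0) (hk : k ≤ n) :
    finrank F (GRS k α v) = k := by
  set L : F[X] →ₗ[F] Fin n → F := LinearMap.pi fun i => v i • leval (α i)
  have hinj : Function.Injective (L ∘ₗ (degreeLT F k).subtype) := by
    rw [← LinearMap.ker_eq_bot, LinearMap.ker_eq_bot']
    rintro ⟨f, hf⟩ hLf
    have heval : ∀ i, f.eval (α i) = 0 := fun i =>
      (mul_eq_zero.mp (congrFun hLf i)).resolve_left (hv i)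
    rw [mem_degreeLT] at hf
    refine Subtype.ext (eq_zero_of_degree_lt_of_eval_index_eq_zero univ hα.injOn ?_
      fun i _ => heval i)
    exact hf.trans_le (by simpa using hk)
  have hrange : GRS k α v = LinearMap.range (L ∘ₗ (degreeLT F k).subtype) := by
    rw [LinearMap.range_comp, Submodule.range_subtype]
    rfl
  rw [hrange, LinearMap.finrank_range_of_inj hinj, (degreeLTEquiv F k).finrank_eq,
    finrank_fin_fun]

theorem GRS_le_dualCode_of_mul_self_eq_nodalWeight (hα : Function.Injective α)
    (hv : ∀ i, v i * v i = nodalWeight univ α i) (hk : 2 * k ≤ n) :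
    GRS k α v ≤ dualCode (GRS k α v) := by
  rintro _ ⟨g, hg, rfl⟩ _ ⟨f, hf, rfl⟩
  have hfg : f * g ∈ degreeLT F (#(univ : Finset (Fin n)) - 1) :=
    degreeLT_mono (by rw [card_univ, Fintype.card_fin]; omega) (mul_mem_degreeLT hf hg)
  calc ∑ i, v i * f.eval (α i) * (v i * g.eval (α i))
      = ∑ i, nodalWeight univ α i * (f * g).eval (α i) := by
        refine sum_congr rfl fun i _ => ?_
        rw [eval_mul, ← hv i]
        ring
    _ = 0 := sum_nodalWeight_mul_eval_eq_zero hα.injOn hfg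

end GRS

theorem existsSelfDualGRS_general {F : Type} [Field F] [Fintype F] (m k : ℕ)
    (hcard : Fintype.card F = 2 ^ m)
    (α : Fin (2 * k) → F) (hα : Function.Injective α) :
    ∃ v : Fin (2 * k) → F, (∀ i, v i ≠ 0) ∧ dualCode (GRS k α v) = GRS k α v := by
  have : CharP F 2 := charP_of_card_eq_prime_pow hcard
  choose v hv using fun i =>
    FiniteField.isSquare_of_char_two (ringChar.eq F 2) (nodalWeight univ α i)
  have hv0 : ∀ i, v i ≠ 0 := fun i h =>
    nodalWeight_ne_zero hα.injOn (mem_univ i) (by rw [hv i, h, mul_zero])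
  refine ⟨v, hv0, dualCode_eq_self_of_le_dualCode
    (GRS_le_dualCode_of_mul_self_eq_nodalWeight hα (fun i => (hv i).symm) le_rfl) ?_⟩
  rw [finrank_GRS hα hv0 (by omega), Fintype.card_fin]

/-- For `q = 2^m` and `1 ≤ k ≤ 2^(m-1)`, for any `2k` pairwise distinct
code locators there exist nonzero column multipliers making the `[2k, k]` generalized
Reed–Solomon code self-dual. -/
theorem existsSelfDualGRS {F : Type} [Field F] [Fintype F] (m k : ℕ) (hm : 1 ≤ m)
    (hcard : Fintype.card F = 2 ^ m) (hk1 : 1 ≤ k) (hk2 : k ≤ 2 ^ (m - 1))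
    (α : Fin (2 * k) → F) (hα : Function.Injective α) :
    ∃ v : Fin (2 * k) → F, (∀ i, v i ≠ 0) ∧ dualCode (GRS k α v) = GRS k α v :=
  existsSelfDualGRS_general m k hcard α hα
end

section
/- Let q be an even prime power with q ≥ n and let k be an integer with n/2 ≤ k ≤ n. For any choice of n pairwise distinct code locators α ∈ F_q^n, there exist nonzero column multipliers v ∈ F_q^n such that the generalized Reed–Solomon code GRS_k(α,v) is weakly self-dual, i.e., GRS_k(α,v)^⊥ ⊆ GRS_k(α,v). -/
open Polynomial Matrix

section Aux

open Finset

/-- Leading coefficient of a Lagrange basis polynomial. -/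
lemma coeff_lagrange_basis {F : Type} [Field F] {n : ℕ} (α : Fin n → F)
    (hα : Function.Injective α) (i : Fin n) :
    (Lagrange.basis Finset.univ α i).coeff (n - 1) =
      (∏ j ∈ Finset.univ.erase i, (α i - α j))⁻¹ := by
  have hinj : Set.InjOn α ↑(Finset.univ : Finset (Fin n)) := hα.injOn
  have hdeg : (Lagrange.basis Finset.univ α i).degree =
      ((Finset.univ : Finset (Fin n)).card - 1 : ℕ) :=
    Lagrange.degree_basis hinj (mem_univ i)
  have hcard : (Finset.univ : Finset (Fin n)).card = n := by simp
  have hnd : (Lagrange.basis Finset.univ α i).natDegree = n - 1 := by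
    rw [hcard] at hdeg
    exact natDegree_eq_of_degree_eq_some hdeg
  rw [← hnd, coeff_natDegree, Lagrange.basis, leadingCoeff_prod, ← Finset.prod_inv_distrib]
  refine Finset.prod_congr rfl fun j hj => ?_
  have hne : α i ≠ α j := fun h => (Finset.mem_erase.mp hj).1 (hα h).symm
  simp [Lagrange.basisDivisor, leadingCoeff_mul, leadingCoeff_X_sub_C, sub_ne_zero.mpr hne]

/-- Key identity: the weighted sum of values of `p` at `n` nodes with the
Lagrange weights equals the coefficient of `X^(n-1)` in `p`. -/
lemma sum_weights_eval {F : Type} [Field F] {n : ℕ} (α : Fin n → F)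
    (hα : Function.Injective α) (p : Polynomial F) (hp : p.degree < (n : ℕ)) :
    ∑ i, (∏ j ∈ Finset.univ.erase i, (α i - α j))⁻¹ * p.eval (α i) = p.coeff (n - 1) := by
  have hinj : Set.InjOn α ↑(Finset.univ : Finset (Fin n)) := hα.injOn
  have hcard : (Finset.univ : Finset (Fin n)).card = n := by simp
  have hrep : Lagrange.interpolate Finset.univ α (fun i => p.eval (α i)) = p :=
    (Lagrange.eq_interpolate hinj (by rwa [hcard])).symm
  conv_rhs => rw [← hrep]
  rw [Lagrange.interpolate_apply, finset_sum_coeff]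
  refine Finset.sum_congr rfl fun i _ => ?_
  rw [coeff_C_mul, coeff_lagrange_basis α hα i, mul_comm]

end Aux

/-- Over a finite field of even (prime power) order `q ≥ n`, for any
`n/2 ≤ k ≤ n` and any pairwise distinct code locators, there exist nonzero column
multipliers making the `[n, k]` generalized Reed–Solomon code weakly self-dual. -/
theorem existsWeaklySelfDualGRS {F : Type} [Field F] [Fintype F] (n k : ℕ)
    (heven : Even (Fintype.card F)) (hn : n ≤ Fintype.card F)
    (hk1 : n ≤ 2 * k) (hk2 : k ≤ n)
    (α : Fin n → F) (hα : Function.Injective α) :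
    ∃ v : Fin n → F, (∀ i, v i ≠ 0) ∧ dualCode (GRS k α v) ≤ GRS k α v := by
  have hchar : ringChar F = 2 :=
    FiniteField.even_card_iff_char_two.mpr (Nat.even_iff.mp heven)
  set u : Fin n → F := fun i => (∏ j ∈ Finset.univ.erase i, (α i - α j))⁻¹ with hu_def
  have hu : ∀ i, u i ≠ 0 := by
    intro i
    refine inv_ne_zero (Finset.prod_ne_zero_iff.mpr fun j hj => sub_ne_zero.mpr fun hij => ?_)
    exact (Finset.mem_erase.mp hj).1 (hα hij).symm
  choose v hv using fun i => (FiniteField.isSquare_of_char_two hchar (u i))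
  have hvne : ∀ i, v i ≠ 0 := by
    intro i h
    exact hu i (by rw [hv i, h, mul_zero])
  refine ⟨v, hvne, ?_⟩
  intro x hx
  -- interpolate x i / v i
  set r : Fin n → F := fun i => x i / v i with hr_def
  set h : Polynomial F := Lagrange.interpolate Finset.univ α r with hh_def
  have hinj : Set.InjOn α ↑(Finset.univ : Finset (Fin n)) := hα.injOn
  have hcard : (Finset.univ : Finset (Fin n)).card = n := by simp
  have hdegh : h.degree < (n : ℕ) := by
    have := Lagrange.degree_interpolate_lt r hinj
    rwa [hcard] at this
  have hevalh : ∀ i, h.eval (α i) = r i := fun i =>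
    Lagrange.eval_interpolate_at_node r hinj (Finset.mem_univ i)
  have hxh : ∀ i, v i * h.eval (α i) = x i := by
    intro i
    rw [hevalh i, hr_def]
    exact mul_div_cancel₀ _ (hvne i)
  -- orthogonality conditions
  have horth : ∀ m, m < k → ∑ i, (v i * α i ^ m) * x i = 0 := by
    intro m hm
    refine hx _ ?_
    simp only [GRS, Submodule.mem_map]
    refine ⟨X ^ m, ?_, ?_⟩
    · rw [Polynomial.mem_degreeLT, Polynomial.degree_X_pow]
      exact_mod_cast hm
    · funext i
      simp [smul_eq_mul]
  -- key coefficient vanishing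
  have hcoeff : ∀ m, m < k → h.coeff (n - 1 - m) = 0 := by
    intro m
    induction m using Nat.strong_induction_on with
    | _ m ih =>
      intro hm
      -- upper coefficients vanish, so degree h ≤ n - 1 - m
      have hmn : m < n := lt_of_lt_of_le hm hk2
      have hdeg2 : h.degree ≤ ((n - 1 - m : ℕ) : WithBot ℕ) := by
        refine (Polynomial.degree_le_iff_coeff_zero _ _).mpr fun t ht => ?_
        have ht' : n - 1 - m < t := by exact_mod_cast ht
        by_cases htn : (n : ℕ) ≤ t
        · exact Polynomial.coeff_eq_zero_of_degree_lt (lt_of_lt_of_le hdegh (by exact_mod_cast htn))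
        · push_neg at htn
          have hj : t = n - 1 - (n - 1 - t) := by omega
          rw [hj]
          exact ih (n - 1 - t) (by omega) (by omega)
      have hdegXm : (X ^ m * h).degree < ((n : ℕ) : WithBot ℕ) := by
        calc (X ^ m * h).degree ≤ (m : WithBot ℕ) + ((n - 1 - m : ℕ) : WithBot ℕ) := by
              rw [Polynomial.degree_mul]
              exact add_le_add (Polynomial.degree_X_pow_le m) hdeg2
          _ = ((m + (n - 1 - m) : ℕ) : WithBot ℕ) := by push_cast; ring
          _ < ((n : ℕ) : WithBot ℕ) := by exact_mod_cast (by omega : m + (n - 1 - m) < n)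
      have hkey := sum_weights_eval α hα (X ^ m * h) hdegXm
      have hls : ∑ i, u i * (X ^ m * h).eval (α i) = 0 := by
        rw [← horth m hm]
        refine Finset.sum_congr rfl fun i _ => ?_
        rw [← hxh i]
        simp only [Polynomial.eval_mul, Polynomial.eval_pow, Polynomial.eval_X, hv i]
        ring
      rw [hls] at hkey
      have hcm : (X ^ m * h).coeff (n - 1) = h.coeff (n - 1 - m) := by
        have heq : n - 1 = (n - 1 - m) + m := by omega
        rw [heq, Polynomial.coeff_X_pow_mul]
        congr 1
        omega
      rw [hcm] at hkey
      exact hkey.symm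
  -- conclude: degree h < k
  have hdegk : h.degree < (k : ℕ) := by
    refine Polynomial.degree_lt_iff_coeff_zero _ _ |>.mpr fun t ht => ?_
    by_cases htn : (n : ℕ) ≤ t
    · exact Polynomial.coeff_eq_zero_of_degree_lt (lt_of_lt_of_le hdegh (by exact_mod_cast htn))
    · push_neg at htn
      have hkt : k ≤ t := by exact_mod_cast ht
      have hj : t = n - 1 - (n - 1 - t) := by omega
      rw [hj]
      exact hcoeff (n - 1 - t) (by omega)
  simp only [GRS, Submodule.mem_map]
  refine ⟨h, Polynomial.mem_degreeLT.mpr hdegk, ?_⟩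
  funext i
  simp only [LinearMap.pi_apply, LinearMap.smul_apply, Polynomial.leval_apply, smul_eq_mul]
  exact hxh i
end

section
/- Let α ∈ F_q^n be pairwise distinct code locators and let v, w ∈ F_q^n be nonzero column multipliers. If k, t ≥ 1 are integers with k + t - 1 ≤ n, then GRS_k(α,v) ⋆ GRS_t(α,w) = GRS_{k+t-1}(α, v⋆w), where v⋆w denotes the componentwise product of the multiplier vectors. -/
open Polynomial Matrix

/-- The star product of generalized Reed–Solomon codes with the same
pairwise distinct locators is again a generalized Reed–Solomon code:
`GRS_k(α, v) ⋆ GRS_t(α, w) = GRS_{k+t-1}(α, v ⋆ w)`. -/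
theorem starProd_GRS {F : Type} [Field F] {n : ℕ} (k t : ℕ) (hk : 1 ≤ k) (ht : 1 ≤ t)
    (hkt : k + t - 1 ≤ n) (α v w : Fin n → F) (hα : Function.Injective α)
    (hv : ∀ i, v i ≠ 0) (hw : ∀ i, w i ≠ 0) :
    starProd (GRS k α v) (GRS t α w) = GRS (k + t - 1) α (v * w) := by
  apply le_antisymm
  · rw [starProd, Submodule.span_le]
    rintro x ⟨c, hc, d, hd, rfl⟩
    obtain ⟨f, hf, rfl⟩ := hc
    obtain ⟨g, hg, rfl⟩ := hd
    refine ⟨f * g, ?_, ?_⟩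
    · rw [SetLike.mem_coe] at hf hg ⊢
      rw [Polynomial.mem_degreeLT] at hf hg ⊢
      rw [Polynomial.degree_mul]
      rcases eq_or_ne f 0 with rfl | hf0
      · rw [Polynomial.degree_zero, WithBot.bot_add]
        exact_mod_cast WithBot.bot_lt_coe _
      rcases eq_or_ne g 0 with rfl | hg0
      · rw [Polynomial.degree_zero, WithBot.add_bot]
        exact_mod_cast WithBot.bot_lt_coe _
      rw [Polynomial.degree_eq_natDegree hf0, Nat.cast_lt] at hf
      rw [Polynomial.degree_eq_natDegree hg0, Nat.cast_lt] at hg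
      rw [Polynomial.degree_eq_natDegree hf0, Polynomial.degree_eq_natDegree hg0,
        ← Nat.cast_add, Nat.cast_lt]
      omega
    · funext i
      simp only [LinearMap.pi_apply, LinearMap.smul_apply, Polynomial.leval_apply,
        Pi.mul_apply, Polynomial.eval_mul, smul_eq_mul]
      ring
  · classical
    rw [GRS, Submodule.map_le_iff_le_comap, Polynomial.degreeLT_eq_span_X_pow,
      Submodule.span_le]
    intro p hp
    simp only [Finset.coe_image, Finset.coe_range, Set.mem_image, Set.mem_Iio] at hp
    obtain ⟨m, hm, rfl⟩ := hp
    set a := min m (k - 1) with ha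
    set b := m - a with hb
    have hab : a + b = m := by omega
    refine Submodule.mem_comap.2 (Submodule.subset_span ?_)
    refine ⟨_, ⟨X ^ a, ?_, rfl⟩, _, ⟨X ^ b, ?_, rfl⟩, ?_⟩
    · rw [SetLike.mem_coe, Polynomial.mem_degreeLT, Polynomial.degree_X_pow, Nat.cast_lt]; omega
    · rw [SetLike.mem_coe, Polynomial.mem_degreeLT, Polynomial.degree_X_pow, Nat.cast_lt]; omega
    · funext i
      simp only [LinearMap.pi_apply, LinearMap.smul_apply, Polynomial.leval_apply,
        Pi.mul_apply, smul_eq_mul, ← hab, pow_add, Polynomial.eval_mul]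
      ring
end

section
/- Let S' ⊆ F_q^n be a weakly self-dual [n,K] linear code (S'^⊥ ⊆ S'), let H ∈ F_q^{(n-K)×n} be a parity-check matrix of S', and let V ⊆ F_q^{2n} be the row span of diag(H, H). Let J = [[0, -I_n],[I_n, 0]] ∈ F_q^{2n×2n}. Then the symplectic dual of V, namely V^{⊥_J} = {w ∈ F_q^{2n} : v J w^T = 0 for all v ∈ V}, equals the Cartesian product code S' × S' = {(s, s') ∈ F_q^{2n} : s, s' ∈ S'}. -/
open Polynomial Matrix

/-!
Since `(v J) ⬝ᵥ w = v ⬝ᵥ (J w)`, a word `w` is symplectically orthogonal to the row span of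
`M = diag(H, H)` exactly when `M (J w) = 0`. As `J (w₁, w₂) = (-w₂, w₁)`, this says
`H w₁ = H w₂ = 0`, i.e. `w₁, w₂ ∈ (S'^⊥)^⊥`, and `(S'^⊥)^⊥ = S'` because the standard bilinear
form is nondegenerate.
-/

theorem dotProductBilin_isRefl {R ι : Type*} [CommSemiring R] [Fintype ι] :
    (dotProductBilin R R : (ι → R) →ₗ[R] (ι → R) →ₗ[R] R).IsRefl := by
  intro x y h
  simpa [dotProduct_comm] using h

theorem dotProductBilin_nondegenerate {R ι : Type*} [CommSemiring R] [Fintype ι]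
    [DecidableEq ι] : (dotProductBilin R R : (ι → R) →ₗ[R] (ι → R) →ₗ[R] R).Nondegenerate :=
  ⟨fun x hx => funext fun i => by simpa using hx (Pi.single i 1),
    fun y hy => funext fun i => by simpa using hy (Pi.single i 1)⟩

theorem dualCode_eq_orthogonal {F ι : Type} [Field F] [Fintype ι] (C : Submodule F (ι → F)) :
    dualCode C = LinearMap.BilinForm.orthogonal (dotProductBilin F F) C := rfl

theorem dualCode_dualCode {F ι : Type} [Field F] [Fintype ι] [DecidableEq ι]
    (C : Submodule F (ι → F)) : dualCode (dualCode C) = C := by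
  simp only [dualCode_eq_orthogonal]
  exact LinearMap.BilinForm.orthogonal_orthogonal
    (dotProductBilin_nondegenerate (R := F) (ι := ι)) (dotProductBilin_isRefl (R := F) (ι := ι)) C

theorem forall_mem_span_range_dotProduct_eq_zero_iff {R m n : Type*} [CommSemiring R]
    [Fintype n] (M : Matrix m n R) (u : n → R) :
    (∀ v ∈ Submodule.span R (Set.range M), v ⬝ᵥ u = 0) ↔ M *ᵥ u = 0 :=
  (Submodule.span_le (p := LinearMap.ker ((dotProductBilin R R).flip u))).trans
    (Set.range_subset_iff.trans funext_iff.symm)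

theorem mem_iff_mulVec_eq_zero_of_span_eq_dualCode {F ι m : Type} [Field F] [Fintype ι]
    [DecidableEq ι] {C : Submodule F (ι → F)} {H : Matrix m ι F}
    (hH : Submodule.span F (Set.range H) = dualCode C) (x : ι → F) :
    x ∈ C ↔ H *ᵥ x = 0 := by
  rw [← forall_mem_span_range_dotProduct_eq_zero_iff, hH]
  conv_lhs => rw [← dualCode_dualCode C]
  rfl

theorem fromBlocks_zero_neg_one_one_zero_mulVec {R n : Type*} [Ring R] [Fintype n]
    [DecidableEq n] (w : n ⊕ n → R) :
    fromBlocks 0 (-1) 1 0 *ᵥ w = Sum.elim (-(w ∘ Sum.inr)) (w ∘ Sum.inl) := by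
  simp only [fromBlocks_mulVec, zero_mulVec, one_mulVec, neg_mulVec, add_zero, zero_add]

theorem fromBlocks_zero_zero_mulVec_eq_zero_iff {R l m n o : Type*} [Semiring R] [Fintype l]
    [Fintype m] (A : Matrix n l R) (D : Matrix o m R) (u : l ⊕ m → R) :
    fromBlocks A 0 0 D *ᵥ u = 0 ↔ A *ᵥ (u ∘ Sum.inl) = 0 ∧ D *ᵥ (u ∘ Sum.inr) = 0 := by
  simp only [fromBlocks_mulVec, zero_mulVec, add_zero, zero_add, ← Sum.elim_zero_zero,
    Sum.elim_eq_iff]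

theorem sympDual_rowSpan_diag_parityCheck_general {F : Type} [Field F] {n K : ℕ}
    (S' : Submodule F (Fin n → F))
    (H : Matrix (Fin (n - K)) (Fin n) F)
    (hHspan : Submodule.span F (Set.range H) = dualCode S') :
    ∀ w : Fin n ⊕ Fin n → F,
      (∀ v ∈ Submodule.span F (Set.range (Matrix.fromBlocks H 0 0 H)),
          dotProduct
            (Matrix.vecMul v
              (Matrix.fromBlocks 0 (-1) 1 0 : Matrix (Fin n ⊕ Fin n) (Fin n ⊕ Fin n) F))
            w = 0) ↔
        w ∈ cartProd S' := by
  intro w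
  simp only [← dotProduct_mulVec, forall_mem_span_range_dotProduct_eq_zero_iff,
    fromBlocks_zero_neg_one_one_zero_mulVec]
  rw [fromBlocks_zero_zero_mulVec_eq_zero_iff, Sum.elim_comp_inl, Sum.elim_comp_inr, mulVec_neg,
    neg_eq_zero, ← mem_iff_mulVec_eq_zero_of_span_eq_dualCode hHspan,
    ← mem_iff_mulVec_eq_zero_of_span_eq_dualCode hHspan, and_comm]
  rfl

/-- Let `S'` be a weakly self-dual `[n, K]` code with parity-check matrix
`H` (rows a basis of `S'^⊥`), and let `V` be the row span of `diag(H, H)`. Then the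
symplectic dual `V^{⊥_J} = {w : v J wᵀ = 0 for all v ∈ V}` (with `J = [[0, -I], [I, 0]]`)
equals the Cartesian product code `S' × S'`. -/
theorem sympDual_rowSpan_diag_parityCheck {F : Type} [Field F] {n K : ℕ}
    (S' : Submodule F (Fin n → F)) (hwsd : dualCode S' ≤ S')
    (H : Matrix (Fin (n - K)) (Fin n) F)
    (hHli : LinearIndependent F H)
    (hHspan : Submodule.span F (Set.range H) = dualCode S') :
    ∀ w : Fin n ⊕ Fin n → F,
      (∀ v ∈ Submodule.span F (Set.range (Matrix.fromBlocks H 0 0 H)),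
          dotProduct
            (Matrix.vecMul v
              (Matrix.fromBlocks 0 (-1) 1 0 : Matrix (Fin n ⊕ Fin n) (Fin n ⊕ Fin n) F))
            w = 0) ↔
        w ∈ cartProd S' :=
  sympDual_rowSpan_diag_parityCheck_general S' H hHspan
end
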